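/- Let d ≥ 1, let g : ℝ^d → ℝ^d be a Schwartz function, and let the Fourier transform be û(x) = (2π)^{−d/2} ∫_{ℝ^d} e^{−i x·η} u(η) dη. Then for every r > 0 and every a ∈ ℝ^d, |∫_{ℝ^d} e^{−i r |η|²} g(η + a) dη| ≤ (π/r)^{d/2} ‖ĝ‖_{L¹}. -/

import Mathlib

open MeasureTheory Filter Set
open scoped RealInnerProductSpace Topology

noncomputable section

abbrev E (d : ℕ) := EuclideanSpace ℝ (Fin d)

/-- the `i`-th component of the Fourier transform
`ĝ(x) = (2π)^{-d/2} ∫ e^{-ix·η} g(η) dη` of an `ℝ^d`-valued Schwartz function `g`. -/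
def ftSi {d : ℕ} (g : SchwartzMap (E d) (E d)) (i : Fin d) (x : E d) : ℂ :=
  ((2 * Real.pi) ^ (-(d : ℝ) / 2) : ℝ) *
    ∫ η, Complex.exp (-Complex.I * (⟪x, η⟫ : ℝ)) * ((g η i : ℝ) : ℂ)

/-- `‖ĝ‖_{L¹}` (with the euclidean norm of the complex vector `ĝ(x)`). -/
def L1ftS {d : ℕ} (g : SchwartzMap (E d) (E d)) : ℝ :=
  ∫ x, Real.sqrt (∑ i, ‖ftSi g i x‖ ^ 2)

/-!
Regularize the Fresnel factor: for `b = ε + i r` with `ε > 0` the Gaussian `e^{-b|η|²}` is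
integrable, and Fourier inversion together with the self-adjointness of `𝓕⁻` moves it to the
frequency side, `∫ e^{-b|η|²} g(η + a) dη = ∫ 𝓕⁻(e^{-b|·|²})(w) 𝓕 g_a(w) dw`. The transformed
Gaussian has modulus at most `(π / |b|)^{d/2} ≤ (π / r)^{d/2}`, translation only changes the phase
of `𝓕 g`, and dominated convergence lets `ε → 0⁺`. For Mathlib's `e^{-2πi⟨x, ξ⟩}`-normalized `𝓕`,
`‖ĝ‖_{L¹} = (2π)^{d/2} ∫ |𝓕 g| ≥ ∫ |𝓕 g|`.
-/

open Complex
open scoped FourierTransform Real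

section Regularization

variable {V : Type*} [NormedAddCommGroup V] [MeasurableSpace V] [OpensMeasurableSpace V]
  {μ : Measure V} {F : Type*} [NormedAddCommGroup F] [NormedSpace ℂ F]

theorem tendsto_integral_cexp_neg_mul_sq_norm_smul {f : V → F} (hf : Integrable f μ) (r : ℝ) :
    Tendsto (fun ε : ℝ ↦ ∫ v, cexp (-(ε + r * I) * ‖v‖ ^ 2) • f v ∂μ) (𝓝[>] 0)
      (𝓝 (∫ v, cexp (-I * ↑(r * ‖v‖ ^ 2)) • f v ∂μ)) := by
  have hcont : ContinuousWithinAt (fun ε : ℝ ↦ ∫ v, cexp (-(ε + r * I) * ‖v‖ ^ 2) • f v ∂μ)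
      (Ici 0) 0 := by
    refine continuousWithinAt_of_dominated (bound := fun v ↦ ‖f v‖) ?_ ?_ hf.norm ?_
    · exact Eventually.of_forall fun ε ↦ (by fun_prop : Continuous fun v : V ↦
        cexp (-(ε + r * I) * ‖v‖ ^ 2)).aestronglyMeasurable.smul hf.1
    · filter_upwards [self_mem_nhdsWithin] with ε (hε : 0 ≤ ε)
      refine ae_of_all _ fun v ↦ ?_
      rw [norm_smul, norm_exp]
      refine mul_le_of_le_one_left (norm_nonneg _) (Real.exp_le_one_iff.2 ?_)
      have hre : (-(ε + r * I) * (‖v‖ : ℂ) ^ 2).re = -(ε * ‖v‖ ^ 2) := by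
        simp [← ofReal_pow]
      rw [hre]
      nlinarith [sq_nonneg ‖v‖]
    · exact ae_of_all _ fun v ↦ (by fun_prop : Continuous fun ε : ℝ ↦
        cexp (-(ε + r * I) * ‖v‖ ^ 2) • f v).continuousWithinAt
  convert (hcont.mono Ioi_subset_Ici_self).tendsto using 4 with v
  push_cast
  ring_nf

end Regularization

section FourierGaussian

variable {V : Type*} [NormedAddCommGroup V] [InnerProductSpace ℝ V] [FiniteDimensional ℝ V]
  [MeasurableSpace V] [BorelSpace V]
  {F : Type*} [NormedAddCommGroup F] [NormedSpace ℂ F]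

theorem integrable_cexp_neg_mul_sq_norm {b : ℂ} (hb : 0 < b.re) :
    Integrable (fun v : V ↦ cexp (-b * ‖v‖ ^ 2)) := by
  simpa using GaussianFourier.integrable_cexp_neg_mul_sq_norm_add hb 0 (0 : V)

theorem norm_fourierInv_gaussian_le {b : ℂ} (hb : 0 < b.re) (w : V) :
    ‖𝓕⁻ (fun v : V ↦ cexp (-b * ‖v‖ ^ 2)) w‖ ≤ (π / ‖b‖) ^ (Module.finrank ℝ V / 2 : ℝ) := by
  have hexp : ‖cexp (-π ^ 2 * ‖-w‖ ^ 2 / b)‖ ≤ 1 := by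
    rw [norm_exp, Real.exp_le_one_iff, div_eq_mul_inv, ← ofReal_pow, ← ofReal_pow,
      ← ofReal_neg, ← ofReal_mul, re_ofReal_mul]
    exact mul_nonpos_of_nonpos_of_nonneg (by nlinarith [sq_nonneg π, sq_nonneg ‖-w‖])
      (by rw [inv_re]; exact div_nonneg hb.le (normSq_nonneg b))
  rw [Real.fourierInv_eq_fourier_neg, fourier_gaussian_innerProductSpace hb, norm_mul,
    show (Module.finrank ℝ V / 2 : ℂ) = ((Module.finrank ℝ V / 2 : ℝ) : ℂ) by push_cast; rfl,
    norm_cpow_real, norm_div, norm_real, Real.norm_of_nonneg Real.pi_pos.le]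
  exact mul_le_of_le_one_right (by positivity) hexp

theorem norm_fourier_comp_add_right (f : V → F) (a w : V) :
    ‖𝓕 (fun v ↦ f (v + a)) w‖ = ‖𝓕 f w‖ := by
  change ‖VectorFourier.fourierIntegral 𝐞 volume (innerₗ V) (f ∘ fun v ↦ v + a) w‖ = _
  rw [VectorFourier.fourierIntegral_comp_add_right, Circle.norm_smul]
  rfl

variable [CompleteSpace F]

theorem integral_fourierInv_smul_eq_of_integrable {φ : V → ℂ} {ψ : V → F}
    (hφ : Integrable φ) (hψ : Integrable ψ) :
    ∫ w, 𝓕⁻ φ w • ψ w = ∫ v, φ v • 𝓕⁻ ψ v := by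
  have hflip : (-innerₗ V).flip = -innerₗ V := by
    ext v w
    simp [real_inner_comm]
  have h := VectorFourier.integral_fourierIntegral_smul_eq_flip (L := -innerₗ V)
    Real.continuous_fourierChar continuous_inner.neg hφ hψ
  rw [hflip] at h
  exact h

theorem integral_cexp_neg_mul_sq_norm_smul_eq {b : ℂ} (hb : 0 < b.re) {f : V → F}
    (hf_cont : Continuous f) (hf : Integrable f) (hf' : Integrable (𝓕 f)) :
    ∫ v, cexp (-b * ‖v‖ ^ 2) • f v = ∫ w, 𝓕⁻ (fun v : V ↦ cexp (-b * ‖v‖ ^ 2)) w • 𝓕 f w := by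
  rw [integral_fourierInv_smul_eq_of_integrable (integrable_cexp_neg_mul_sq_norm hb) hf',
    hf_cont.fourierInv_fourier_eq hf hf']

theorem norm_integral_cexp_neg_mul_sq_norm_smul_le {b : ℂ} (hb : 0 < b.re) {f : V → F}
    (hf_cont : Continuous f) (hf : Integrable f) (hf' : Integrable (𝓕 f)) :
    ‖∫ v, cexp (-b * ‖v‖ ^ 2) • f v‖
      ≤ (π / ‖b‖) ^ (Module.finrank ℝ V / 2 : ℝ) * ∫ w, ‖𝓕 f w‖ := by
  rw [integral_cexp_neg_mul_sq_norm_smul_eq hb hf_cont hf hf', ← integral_const_mul]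
  refine norm_integral_le_of_norm_le (hf'.norm.const_mul _) (ae_of_all _ fun w ↦ ?_)
  rw [norm_smul]
  exact mul_le_mul_of_nonneg_right (norm_fourierInv_gaussian_le hb w) (norm_nonneg _)

theorem norm_integral_cexp_neg_I_mul_sq_norm_smul_le {f : V → F} (hf_cont : Continuous f)
    (hf : Integrable f) (hf' : Integrable (𝓕 f)) {r : ℝ} (hr : 0 < r) (a : V) :
    ‖∫ v, cexp (-I * ↑(r * ‖v‖ ^ 2)) • f (v + a)‖
      ≤ (π / r) ^ (Module.finrank ℝ V / 2 : ℝ) * ∫ w, ‖𝓕 f w‖ := by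
  set fa : V → F := fun v ↦ f (v + a)
  have hfa : Integrable fa := hf.comp_add_right a
  have hfa' : Integrable (𝓕 fa) := by
    refine hf'.congr' ?_ (ae_of_all _ fun w ↦ (norm_fourier_comp_add_right f a w).symm)
    exact (VectorFourier.fourierIntegral_continuous Real.continuous_fourierChar
      (innerSL ℝ).continuous₂ hfa).aestronglyMeasurable
  have hnorm : ∫ w, ‖𝓕 fa w‖ = ∫ w, ‖𝓕 f w‖ := by
    simp_rw [fa, norm_fourier_comp_add_right]
  refine le_of_tendsto (tendsto_integral_cexp_neg_mul_sq_norm_smul hfa r).norm ?_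
  filter_upwards [self_mem_nhdsWithin] with ε (hε : 0 < ε)
  have hb : r ≤ ‖(ε + r * I : ℂ)‖ := by
    simpa [abs_of_pos hr] using abs_im_le_norm (ε + r * I : ℂ)
  calc _ ≤ (π / ‖(ε + r * I : ℂ)‖) ^ (Module.finrank ℝ V / 2 : ℝ) * ∫ w, ‖𝓕 fa w‖ :=
        norm_integral_cexp_neg_mul_sq_norm_smul_le (by simpa using hε)
          (hf_cont.comp (continuous_add_const a)) hfa hfa'
    _ ≤ _ := by
      rw [hnorm]
      gcongr

end FourierGaussian

section Complexify

variable {ι : Type*} [Fintype ι]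

def EuclideanSpace.complexifyCLM (ι : Type*) [Fintype ι] :
    EuclideanSpace ℝ ι →L[ℝ] EuclideanSpace ℂ ι :=
  LinearMap.toContinuousLinearMap
    { toFun := fun x ↦ WithLp.toLp 2 fun i ↦ (x i : ℂ)
      map_add' := fun x y ↦ by ext i; simp
      map_smul' := fun c x ↦ by ext i; simp }

theorem EuclideanSpace.norm_integral_eq {X : Type*} [MeasurableSpace X] {μ : Measure X}
    {φ : X → EuclideanSpace ℂ ι} (hφ : Integrable φ μ) :
    ‖∫ x, φ x ∂μ‖ = Real.sqrt (∑ i, ‖∫ x, φ x i ∂μ‖ ^ 2) := by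
  simp_rw [EuclideanSpace.norm_eq, eval_integral_piLp hφ.eval_piLp]

variable {V : Type*} [NormedAddCommGroup V] [NormedSpace ℝ V]

def SchwartzMap.complexify (g : SchwartzMap V (EuclideanSpace ℝ ι)) :
    SchwartzMap V (EuclideanSpace ℂ ι) :=
  SchwartzMap.postcompCLM (𝕜 := ℝ) (EuclideanSpace.complexifyCLM ι) g

@[simp] theorem SchwartzMap.complexify_apply (g : SchwartzMap V (EuclideanSpace ℝ ι)) (x : V)
    (i : ι) : g.complexify x i = (g x i : ℂ) :=
  rfl

end Complexify

section NormalizedFourier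

variable {d : ℕ}

theorem ftSi_eq (g : SchwartzMap (E d) (E d)) (i : Fin d) (x : E d) :
    ftSi g i x = ((2 * π) ^ (-(d : ℝ) / 2) : ℝ) * 𝓕 (g.complexify : E d → _) ((2 * π)⁻¹ • x) i := by
  rw [ftSi, Real.fourier_eq,
    eval_integral_piLp ((Real.fourierIntegral_convergent_iff _).2 g.complexify.integrable).eval_piLp]
  congr 1
  refine integral_congr_ae (ae_of_all _ fun η ↦ ?_)
  have hphase : -⟪η, (2 * π)⁻¹ • x⟫ = -(2 * π)⁻¹ * ⟪x, η⟫ := by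
    rw [real_inner_smul_right, real_inner_comm]
    ring
  dsimp only
  rw [Circle.smul_def, PiLp.smul_apply, SchwartzMap.complexify_apply, hphase,
    Real.fourierChar_apply]
  congr 2
  push_cast
  field_simp

theorem L1ftS_eq (g : SchwartzMap (E d) (E d)) :
    L1ftS g = (2 * π) ^ ((d : ℝ) / 2) * ∫ w, ‖𝓕 (g.complexify : E d → _) w‖ := by
  set c : ℝ := (2 * π) ^ (-(d : ℝ) / 2)
  have hpoint (x : E d) : Real.sqrt (∑ i, ‖ftSi g i x‖ ^ 2)
      = c * ‖𝓕 (g.complexify : E d → _) ((2 * π)⁻¹ • x)‖ := by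
    have hi (i : Fin d) : ftSi g i x = ((c : ℂ) • 𝓕 (g.complexify : E d → _) ((2 * π)⁻¹ • x)) i :=
      ftSi_eq g i x
    simp_rw [hi, ← EuclideanSpace.norm_eq, norm_smul, norm_real,
      Real.norm_of_nonneg (by positivity : 0 ≤ c)]
  have hscale : c * (2 * π) ^ d = (2 * π) ^ ((d : ℝ) / 2) := by
    rw [← Real.rpow_natCast, ← Real.rpow_add (by positivity)]
    ring_nf
  simp_rw [L1ftS, hpoint, integral_const_mul]
  rw [Measure.integral_comp_inv_smul volume (fun w ↦ ‖𝓕 (g.complexify : E d → _) w‖),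
    finrank_euclideanSpace_fin, smul_eq_mul,
    abs_of_pos (by positivity : (0 : ℝ) < (2 * π) ^ d), ← mul_assoc, hscale]

theorem integral_norm_fourier_complexify_le_L1ftS (g : SchwartzMap (E d) (E d)) :
    ∫ w, ‖𝓕 (g.complexify : E d → _) w‖ ≤ L1ftS g := by
  rw [L1ftS_eq]
  refine le_mul_of_one_le_left (integral_nonneg fun w ↦ norm_nonneg _) ?_
  exact Real.one_le_rpow (by nlinarith [Real.pi_gt_three]) (by positivity)

end NormalizedFourier

theorem statement5_general (d : ℕ) (g : SchwartzMap (E d) (E d)) :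
    ∀ r : ℝ, 0 < r → ∀ a : E d,
      Real.sqrt (∑ i, ‖∫ η, Complex.exp (-Complex.I * (r * ‖η‖ ^ 2 : ℝ)) * ((g (η + a) i : ℝ) : ℂ)‖ ^ 2)
        ≤ (Real.pi / r) ^ ((d : ℝ) / 2) * L1ftS g := by
  intro r hr a
  set G := g.complexify
  have hG := norm_integral_cexp_neg_I_mul_sq_norm_smul_le G.continuous G.integrable
    (𝓕 G).integrable hr a
  rw [finrank_euclideanSpace_fin] at hG
  have hint : Integrable fun η : E d ↦ cexp (-I * ↑(r * ‖η‖ ^ 2)) • G (η + a) := by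
    refine (G.integrable.comp_add_right a).congr' ?_ (ae_of_all _ fun η ↦ ?_)
    · exact (by fun_prop : Continuous fun η : E d ↦
        cexp (-I * ↑(r * ‖η‖ ^ 2)) • G (η + a)).aestronglyMeasurable
    · rw [norm_smul, neg_mul, ← mul_neg, ← ofReal_neg, norm_exp_I_mul_ofReal, one_mul]
  calc _ = ‖∫ η, cexp (-I * ↑(r * ‖η‖ ^ 2)) • G (η + a)‖ := by
        rw [EuclideanSpace.norm_integral_eq hint]
        simp [G]
    _ ≤ _ := hG
    _ ≤ _ := by
      gcongr
      exact integral_norm_fourier_complexify_le_L1ftS g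

/-- for `d ≥ 1`, `g : ℝ^d → ℝ^d` Schwartz, `r > 0` and `a ∈ ℝ^d`,
`|∫ e^{−i r |η|²} g(η + a) dη| ≤ (π/r)^{d/2} ‖ĝ‖_{L¹}`. -/
theorem statement5 (d : ℕ) (hd : 1 ≤ d) (g : SchwartzMap (E d) (E d)) :
    ∀ r : ℝ, 0 < r → ∀ a : E d,
      Real.sqrt (∑ i, ‖∫ η, Complex.exp (-Complex.I * (r * ‖η‖ ^ 2 : ℝ)) * ((g (η + a) i : ℝ) : ℂ)‖ ^ 2)
        ≤ (Real.pi / r) ^ ((d : ℝ) / 2) * L1ftS g :=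
  statement5_general d g
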